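/- arXiv:2507.19448 — 4 statements merged into one kernel-verified Lean document; each statement's English description precedes it below -/
import Mathlib

section
/- Let a < b be real numbers and let f, g, h : ℝ → ℝ be continuous functions with h(a) = 0 = h(b), h(t) > 0 for all t ∈ (a,b), and such that the curve t ↦ (f(t), g(t), h(t)) is injective on [a,b]. Then the subset {(f(t), g(t), h(t)·cos s, h(t)·sin s) : t ∈ [a,b], s ∈ ℝ} of ℝ⁴, equipped with the subspace topology, is homeomorphic to the unit 2-sphere {x ∈ ℝ³ : ‖x‖ = 1}. -/
open Real Set Filter Topology

noncomputable def spinT (a b : ℝ) (x : EuclideanSpace ℝ (Fin 3)) : ℝ :=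
  a + (b - a) / Real.pi * Real.arccos (x 0)

noncomputable def spinR (x : EuclideanSpace ℝ (Fin 3)) : ℝ :=
  Real.sqrt ((x 1) ^ 2 + (x 2) ^ 2)

noncomputable def spinPhi (a b : ℝ) (f g h : ℝ → ℝ) (x : EuclideanSpace ℝ (Fin 3)) :
    ℝ × ℝ × ℝ × ℝ :=
  (f (spinT a b x), g (spinT a b x),
   h (spinT a b x) * (x 1 / spinR x), h (spinT a b x) * (x 2 / spinR x))

lemma spinR_nonneg (x : EuclideanSpace ℝ (Fin 3)) : 0 ≤ spinR x := Real.sqrt_nonneg _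

lemma abs_div_spinR_le_one₁ (x : EuclideanSpace ℝ (Fin 3)) : |x 1 / spinR x| ≤ 1 := by
  rcases eq_or_ne (spinR x) 0 with h0 | h0
  · simp [h0]
  · have hr : 0 < spinR x := lt_of_le_of_ne (spinR_nonneg x) (Ne.symm h0)
    rw [abs_div, abs_of_pos hr, div_le_one hr]
    calc |x 1| = Real.sqrt ((x 1) ^ 2) := (Real.sqrt_sq_eq_abs _).symm
    _ ≤ spinR x := Real.sqrt_le_sqrt (by nlinarith [sq_nonneg (x 2)])

lemma abs_div_spinR_le_one₂ (x : EuclideanSpace ℝ (Fin 3)) : |x 2 / spinR x| ≤ 1 := by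
  rcases eq_or_ne (spinR x) 0 with h0 | h0
  · simp [h0]
  · have hr : 0 < spinR x := lt_of_le_of_ne (spinR_nonneg x) (Ne.symm h0)
    rw [abs_div, abs_of_pos hr, div_le_one hr]
    calc |x 2| = Real.sqrt ((x 2) ^ 2) := (Real.sqrt_sq_eq_abs _).symm
    _ ≤ spinR x := Real.sqrt_le_sqrt (by nlinarith [sq_nonneg (x 1)])

lemma spinT_continuous (a b : ℝ) : Continuous (spinT a b) := by
  unfold spinT
  exact continuous_const.add (continuous_const.mul
    (Real.continuous_arccos.comp (PiLp.continuous_apply 2 _ 0)))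

lemma spinR_continuous : Continuous spinR := by
  unfold spinR
  exact Real.continuous_sqrt.comp
    (((PiLp.continuous_apply 2 _ 1).pow 2).add ((PiLp.continuous_apply 2 _ 2).pow 2))

set_option maxHeartbeats 1000000 in
/-- The image of the Artin spin map of an injective arc in the upper half space
(with endpoints on the boundary plane) is homeomorphic to the unit 2-sphere. -/
theorem stmt_0 (a b : ℝ) (hab : a < b) (f g h : ℝ → ℝ)
    (hf : Continuous f) (hg : Continuous g) (hh : Continuous h)
    (ha : h a = 0) (hb : h b = 0)
    (hpos : ∀ t ∈ Set.Ioo a b, 0 < h t)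
    (hinj : Set.InjOn (fun t => (f t, g t, h t)) (Set.Icc a b)) :
    Nonempty
      (({v : ℝ × ℝ × ℝ × ℝ | ∃ t ∈ Set.Icc a b, ∃ s : ℝ,
          v = (f t, g t, h t * Real.cos s, h t * Real.sin s)}) ≃ₜ
        ({x : EuclideanSpace ℝ (Fin 3) | ‖x‖ = 1})) := by
  have hπ : (0:ℝ) < Real.pi := Real.pi_pos
  have hba : (0:ℝ) < b - a := by linarith
  -- basic facts about points on the sphere
  have hsum : ∀ x : EuclideanSpace ℝ (Fin 3), ‖x‖ = 1 →
      (x 0) ^ 2 + (x 1) ^ 2 + (x 2) ^ 2 = 1 := by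
    intro x hx
    rw [EuclideanSpace.norm_eq, Fin.sum_univ_three] at hx
    have h2 : ‖x 0‖ ^ 2 + ‖x 1‖ ^ 2 + ‖x 2‖ ^ 2 = 1 := by
      have := congrArg (fun r => r ^ 2) hx
      simp only [one_pow] at this
      rw [Real.sq_sqrt (by positivity)] at this
      exact this
    simpa [Real.norm_eq_abs, sq_abs] using h2
  have hx0mem : ∀ x : EuclideanSpace ℝ (Fin 3), ‖x‖ = 1 → x 0 ∈ Set.Icc (-1:ℝ) 1 := by
    intro x hx
    have := hsum x hx
    constructor <;> nlinarith [sq_nonneg (x 1), sq_nonneg (x 2), sq_nonneg (x 0 - 1),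
      sq_nonneg (x 0 + 1)]
  have hrsq : ∀ x : EuclideanSpace ℝ (Fin 3), ‖x‖ = 1 →
      (spinR x) ^ 2 = 1 - (x 0) ^ 2 := by
    intro x hx
    have := hsum x hx
    rw [spinR, Real.sq_sqrt (by nlinarith)]
    linarith
  -- spinT maps into [a,b]
  have htmem : ∀ x : EuclideanSpace ℝ (Fin 3), spinT a b x ∈ Set.Icc a b := by
    intro x
    have h1 : 0 ≤ Real.arccos (x 0) := Real.arccos_nonneg _
    have h2 : Real.arccos (x 0) ≤ Real.pi := Real.arccos_le_pi _
    have hc : 0 < (b - a) / Real.pi := by positivity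
    constructor
    · rw [spinT]; nlinarith
    · rw [spinT]
      have h3 : (b - a) / Real.pi * Real.arccos (x 0) ≤ (b - a) / Real.pi * Real.pi :=
        mul_le_mul_of_nonneg_left h2 (le_of_lt hc)
      rw [div_mul_cancel₀ _ (ne_of_gt hπ)] at h3
      linarith
  -- h is nonneg on [a,b]
  have hnonneg : ∀ t ∈ Set.Icc a b, 0 ≤ h t := by
    intro t ht
    rcases eq_or_lt_of_le ht.1 with rfl | h1
    · exact le_of_eq ha.symm
    rcases eq_or_lt_of_le ht.2 with rfl | h2
    · exact le_of_eq hb.symm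
    exact le_of_lt (hpos t ⟨h1, h2⟩)
  -- the vanishing dichotomy
  have hzero : ∀ x : EuclideanSpace ℝ (Fin 3), ‖x‖ = 1 →
      (spinR x = 0 ↔ h (spinT a b x) = 0) := by
    intro x hx
    constructor
    · intro hr
      have hsq : (x 0) ^ 2 = 1 := by have := hrsq x hx; rw [hr] at this; nlinarith
      have hone : (x 0 - 1) * (x 0 + 1) = 0 := by nlinarith
      rcases mul_eq_zero.mp hone with h1 | h1
      · have h1' : x 0 = 1 := by linarith
        have : spinT a b x = a := by rw [spinT, h1', Real.arccos_one]; ring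
        rw [this]; exact ha
      · have h1' : x 0 = -1 := by linarith
        have : spinT a b x = b := by
          rw [spinT, h1', Real.arccos_neg_one, div_mul_cancel₀ _ (ne_of_gt hπ)]; ring
        rw [this]; exact hb
    · intro hzt
      by_contra hr
      have htm := htmem x
      have hab' : spinT a b x = a ∨ spinT a b x = b := by
        by_contra hcon
        push_neg at hcon
        have : spinT a b x ∈ Set.Ioo a b :=
          ⟨lt_of_le_of_ne htm.1 (Ne.symm hcon.1), lt_of_le_of_ne htm.2 hcon.2⟩
        exact absurd hzt (ne_of_gt (hpos _ this))
      have hx0 : (x 0) ^ 2 = 1 := by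
        rcases hab' with hta | htb
        · have harc : Real.arccos (x 0) = 0 := by
            rw [spinT] at hta
            have h5 : (b - a) / Real.pi * Real.arccos (x 0) = 0 := by linarith
            have hc : (b - a) / Real.pi ≠ 0 := by positivity
            exact (mul_eq_zero.mp h5).resolve_left hc
          have h6 : (1:ℝ) ≤ x 0 := Real.arccos_eq_zero.mp harc
          have := (hx0mem x hx).2
          nlinarith
        · have harc : Real.arccos (x 0) = Real.pi := by
            rw [spinT] at htb
            have h5 : (b - a) / Real.pi * Real.arccos (x 0) = b - a := by linarith
            have h6 : (b - a) / Real.pi * Real.pi = b - a :=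
              div_mul_cancel₀ _ (ne_of_gt hπ)
            have hc : (b - a) / Real.pi ≠ 0 := by positivity
            exact mul_left_cancel₀ hc (by linarith)
          have h6 : x 0 ≤ -1 := Real.arccos_eq_pi.mp harc
          have := (hx0mem x hx).1
          nlinarith
      have h7 : spinR x ^ 2 = 0 := by rw [hrsq x hx, hx0]; ring
      exact hr (by nlinarith [spinR_nonneg x])
  -- Phi maps the sphere into V
  have hmem : ∀ x : EuclideanSpace ℝ (Fin 3), ‖x‖ = 1 →
      ∃ t ∈ Set.Icc a b, ∃ s : ℝ,
        spinPhi a b f g h x = (f t, g t, h t * Real.cos s, h t * Real.sin s) := by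
    intro x hx
    rcases eq_or_ne (spinR x) 0 with hr | hr
    · refine ⟨spinT a b x, htmem x, 0, ?_⟩
      have hz : h (spinT a b x) = 0 := (hzero x hx).mp hr
      simp [spinPhi, hz]
    · set z : ℂ := ⟨x 1, x 2⟩ with hzdef
      have hzne : z ≠ 0 := by
        intro hzz
        apply hr
        have h1 : x 1 = 0 := by
          have := congrArg Complex.re hzz; simpa [hzdef] using this
        have h2 : x 2 = 0 := by
          have := congrArg Complex.im hzz; simpa [hzdef] using this
        simp [spinR, h1, h2]
      have habs : ‖z‖ = spinR x := by
        rw [Complex.norm_def, spinR]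
        congr 1
        rw [hzdef]
        rw [Complex.normSq_mk]
        ring
      refine ⟨spinT a b x, htmem x, Complex.arg z, ?_⟩
      have hc : Real.cos (Complex.arg z) = x 1 / spinR x := by
        rw [Complex.cos_arg hzne, habs]
      have hs : Real.sin (Complex.arg z) = x 2 / spinR x := by
        rw [Complex.sin_arg, habs]
      simp [spinPhi, hc, hs]
  -- Phi is injective on the sphere
  have hinjPhi : ∀ x : EuclideanSpace ℝ (Fin 3), ‖x‖ = 1 →
      ∀ y : EuclideanSpace ℝ (Fin 3), ‖y‖ = 1 →
      spinPhi a b f g h x = spinPhi a b f g h y → x = y := by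
    intro x hx y hy hxy
    simp only [spinPhi, Prod.mk.injEq] at hxy
    obtain ⟨e1, e2, e3, e4⟩ := hxy
    have hHsq : ∀ w : EuclideanSpace ℝ (Fin 3), ‖w‖ = 1 → (h (spinT a b w)) ^ 2 *
        ((w 1 / spinR w) ^ 2 + (w 2 / spinR w) ^ 2) = (h (spinT a b w)) ^ 2 := by
      intro w hw
      rcases eq_or_ne (spinR w) 0 with hr | hr
      · have := (hzero w hw).mp hr
        rw [this]; ring
      · have hsq : (w 1) ^ 2 + (w 2) ^ 2 = (spinR w) ^ 2 := by
          rw [spinR, Real.sq_sqrt (by positivity)]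
        have hone : (w 1 / spinR w) ^ 2 + (w 2 / spinR w) ^ 2 = 1 := by
          field_simp
          linarith [hsq]
        rw [hone, mul_one]
    have hHx : h (spinT a b x) = h (spinT a b y) := by
      have h3 := hHsq x hx
      have h4 := hHsq y hy
      have q3 : (h (spinT a b x)) ^ 2 * (x 1 / spinR x) ^ 2 =
          (h (spinT a b y)) ^ 2 * (y 1 / spinR y) ^ 2 := by
        have := congrArg (fun r => r ^ 2) e3
        simpa [mul_pow] using this
      have q4 : (h (spinT a b x)) ^ 2 * (x 2 / spinR x) ^ 2 =
          (h (spinT a b y)) ^ 2 * (y 2 / spinR y) ^ 2 := by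
        have := congrArg (fun r => r ^ 2) e4
        simpa [mul_pow] using this
      have hsq : (h (spinT a b x)) ^ 2 = (h (spinT a b y)) ^ 2 := by
        rw [← h3, ← h4, mul_add, mul_add, q3, q4]
      exact (sq_eq_sq₀ (hnonneg _ (htmem x)) (hnonneg _ (htmem y))).mp hsq
    have htxy : spinT a b x = spinT a b y := by
      apply hinj (htmem x) (htmem y)
      simp only [Prod.mk.injEq]
      exact ⟨e1, e2, hHx⟩
    have hx0y0 : x 0 = y 0 := by
      have harc : Real.arccos (x 0) = Real.arccos (y 0) := by
        unfold spinT at htxy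
        have hc : (b - a) / Real.pi ≠ 0 := by positivity
        exact mul_left_cancel₀ hc (by linarith)
      exact Real.arccos_injOn (hx0mem x hx) (hx0mem y hy) harc
    have hrxy : spinR x = spinR y := by
      have h1 := hrsq x hx
      have h2 := hrsq y hy
      have hsq2 : spinR x ^ 2 = spinR y ^ 2 := by rw [h1, h2, hx0y0]
      exact (sq_eq_sq₀ (spinR_nonneg x) (spinR_nonneg y)).mp hsq2
    have hcomp : x 1 = y 1 ∧ x 2 = y 2 := by
      rcases eq_or_ne (spinR x) 0 with hr | hr
      · have hry : spinR y = 0 := hrxy ▸ hr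
        have hx1 : (x 1) ^ 2 + (x 2) ^ 2 = 0 := by
          have h9 : Real.sqrt ((x 1) ^ 2 + (x 2) ^ 2) = 0 := hr
          nlinarith [Real.sq_sqrt (show (0:ℝ) ≤ (x 1) ^ 2 + (x 2) ^ 2 by positivity), h9]
        have hy1 : (y 1) ^ 2 + (y 2) ^ 2 = 0 := by
          have h9 : Real.sqrt ((y 1) ^ 2 + (y 2) ^ 2) = 0 := hry
          nlinarith [Real.sq_sqrt (show (0:ℝ) ≤ (y 1) ^ 2 + (y 2) ^ 2 by positivity), h9]
        have hx1' : x 1 = 0 := sq_eq_zero_iff.mp (by nlinarith [sq_nonneg (x 2)])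
        have hx2' : x 2 = 0 := sq_eq_zero_iff.mp (by nlinarith [sq_nonneg (x 1)])
        have hy1' : y 1 = 0 := sq_eq_zero_iff.mp (by nlinarith [sq_nonneg (y 2)])
        have hy2' : y 2 = 0 := sq_eq_zero_iff.mp (by nlinarith [sq_nonneg (y 1)])
        rw [hx1', hx2', hy1', hy2']
        exact ⟨rfl, rfl⟩
      · have hHne : h (spinT a b x) ≠ 0 := fun hz => hr ((hzero x hx).mpr hz)
        have e3' : x 1 / spinR x = y 1 / spinR y := mul_left_cancel₀ hHne (by
          rw [e3, hHx])
        have e4' : x 2 / spinR x = y 2 / spinR y := mul_left_cancel₀ hHne (by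
          rw [e4, hHx])
        rw [← hrxy] at e3' e4'
        constructor
        · field_simp [hr] at e3'; exact e3'
        · field_simp [hr] at e4'; exact e4'
    ext i
    fin_cases i
    · exact hx0y0
    · exact hcomp.1
    · exact hcomp.2
  -- Phi is surjective onto V
  have hsurj : ∀ t ∈ Set.Icc a b, ∀ s : ℝ, ∃ x : EuclideanSpace ℝ (Fin 3), ‖x‖ = 1 ∧
      spinPhi a b f g h x = (f t, g t, h t * Real.cos s, h t * Real.sin s) := by
    intro t ht s
    set θ := Real.pi * (t - a) / (b - a) with hθd
    have hθ0 : 0 ≤ θ := by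
      apply div_nonneg _ (le_of_lt hba)
      nlinarith [ht.1]
    have hθπ : θ ≤ Real.pi := by
      rw [hθd, div_le_iff₀ hba]
      nlinarith [ht.2]
    set x : EuclideanSpace ℝ (Fin 3) :=
      (WithLp.equiv 2 (Fin 3 → ℝ)).symm
        ![Real.cos θ, Real.sin θ * Real.cos s, Real.sin θ * Real.sin s] with hxd
    have hx0 : x 0 = Real.cos θ := by rw [hxd]; rfl
    have hx1 : x 1 = Real.sin θ * Real.cos s := by
      rw [hxd]; rfl
    have hx2 : x 2 = Real.sin θ * Real.sin s := by
      rw [hxd]; rfl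
    have hxS : ‖x‖ = 1 := by
      rw [EuclideanSpace.norm_eq, Fin.sum_univ_three, hx0, hx1, hx2]
      have hone : ‖Real.cos θ‖ ^ 2 + ‖Real.sin θ * Real.cos s‖ ^ 2 +
          ‖Real.sin θ * Real.sin s‖ ^ 2 = 1 := by
        simp only [Real.norm_eq_abs, sq_abs]
        nlinarith [Real.sin_sq_add_cos_sq θ, Real.sin_sq_add_cos_sq s]
      rw [hone, Real.sqrt_one]
    have hts : spinT a b x = t := by
      rw [spinT, hx0, Real.arccos_cos hθ0 hθπ, hθd]
      field_simp
      ring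
    have hrs : spinR x = Real.sin θ := by
      rw [spinR, hx1, hx2]
      have hone : (Real.sin θ * Real.cos s) ^ 2 + (Real.sin θ * Real.sin s) ^ 2 =
          (Real.sin θ) ^ 2 := by nlinarith [Real.sin_sq_add_cos_sq s]
      rw [hone, Real.sqrt_sq (Real.sin_nonneg_of_nonneg_of_le_pi hθ0 hθπ)]
    refine ⟨x, hxS, ?_⟩
    rcases eq_or_ne (Real.sin θ) 0 with hsθ | hsθ
    · have hrz : spinR x = 0 := by rw [hrs, hsθ]
      have hz : h t = 0 := by
        have := (hzero x hxS).mp hrz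
        rwa [hts] at this
      simp [spinPhi, hts, hz]
    · simp only [spinPhi, hts, hx1, hx2, hrs]
      rw [mul_comm (Real.sin θ) (Real.cos s), mul_comm (Real.sin θ) (Real.sin s),
        mul_div_assoc, mul_div_assoc, div_self hsθ, mul_one, mul_one]
  -- Continuity of Phi on the sphere
  have hcont : ContinuousOn (spinPhi a b f g h) {x : EuclideanSpace ℝ (Fin 3) | ‖x‖ = 1} := by
    have htc : Continuous (spinT a b) := spinT_continuous a b
    have hfc : Continuous fun x => f (spinT a b x) := hf.comp htc
    have hgc : Continuous fun x => g (spinT a b x) := hg.comp htc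
    have hhc : Continuous fun x => h (spinT a b x) := hh.comp htc
    have hc3 : ∀ (i : Fin 3), (∀ y : EuclideanSpace ℝ (Fin 3), |y i / spinR y| ≤ 1) →
        ContinuousOn (fun x : EuclideanSpace ℝ (Fin 3) =>
          h (spinT a b x) * (x i / spinR x)) {x : EuclideanSpace ℝ (Fin 3) | ‖x‖ = 1} := by
      intro i hbound x hx
      rcases eq_or_ne (spinR x) 0 with hr | hr
      · have hz : h (spinT a b x) = 0 := (hzero x hx).mp hr
        have hval : h (spinT a b x) * (x i / spinR x) = 0 := by rw [hz]; ring
        rw [ContinuousWithinAt, hval]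
        apply squeeze_zero_norm (a := fun y => |h (spinT a b y)|)
        · intro y
          rw [Real.norm_eq_abs, abs_mul]
          calc |h (spinT a b y)| * |y i / spinR y| ≤ |h (spinT a b y)| * 1 :=
            mul_le_mul_of_nonneg_left (hbound y) (abs_nonneg _)
          _ = |h (spinT a b y)| := mul_one _
        · have htend : Filter.Tendsto (fun y => |h (spinT a b y)|) (nhds x)
              (nhds |h (spinT a b x)|) := (hhc.abs).tendsto x
          rw [hz, abs_zero] at htend
          exact htend.mono_left nhdsWithin_le_nhds
      · exact ((hhc.continuousAt).mul
          (((PiLp.continuous_apply 2 _ i).continuousAt).div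
            (spinR_continuous.continuousAt) hr)).continuousWithinAt
    exact hfc.continuousOn.prodMk (hgc.continuousOn.prodMk
      ((hc3 1 abs_div_spinR_le_one₁).prodMk (hc3 2 abs_div_spinR_le_one₂)))
  -- assemble the homeomorphism
  have hcompS : CompactSpace {x : EuclideanSpace ℝ (Fin 3) | ‖x‖ = 1} := by
    have hsph : {x : EuclideanSpace ℝ (Fin 3) | ‖x‖ = 1} = Metric.sphere 0 1 := by
      ext x; simp [dist_zero_right]
    rw [hsph]
    exact isCompact_iff_compactSpace.mp (isCompact_sphere 0 1)
  let Φ : {x : EuclideanSpace ℝ (Fin 3) | ‖x‖ = 1} →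
      {v : ℝ × ℝ × ℝ × ℝ | ∃ t ∈ Set.Icc a b, ∃ s : ℝ,
        v = (f t, g t, h t * Real.cos s, h t * Real.sin s)} :=
    fun x => ⟨spinPhi a b f g h x, by
      obtain ⟨t, ht, s, hs⟩ := hmem x x.2
      exact ⟨t, ht, s, hs⟩⟩
  have hΦbij : Function.Bijective Φ := by
    constructor
    · intro x y hxy
      exact Subtype.ext (hinjPhi x x.2 y y.2 (congrArg Subtype.val hxy))
    · rintro ⟨v, t, ht, s, rfl⟩
      obtain ⟨x, hxS, hxe⟩ := hsurj t ht s
      exact ⟨⟨x, hxS⟩, Subtype.ext hxe⟩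
  have hΦc : Continuous Φ :=
    Continuous.subtype_mk (continuousOn_iff_continuous_restrict.mp hcont) _
  let e := Equiv.ofBijective Φ hΦbij
  have hec : Continuous (e : _ → _) := hΦc
  exact ⟨(hec.homeoOfEquivCompactToT2 (f := e)).symm⟩
end

section
/- Let a < b be real numbers and let f, g, h : ℝ → ℝ be functions with h(t) > 0 for all t ∈ (a,b), h(a) = 0 = h(b), and such that the curve t ↦ (f(t), g(t), h(t)) is injective on [a,b]. Define F(t,s) = (f(t), g(t), h(t)·cos s, h(t)·sin s). Then for all t₁, t₂ ∈ [a,b] and s₁, s₂ ∈ [0, 2π), F(t₁,s₁) = F(t₂,s₂) implies t₁ = t₂ and (s₁ = s₂ or h(t₁) = 0). -/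
/-- Injectivity of the spin map away from the rotation axis. -/
theorem stmt_1 (a b : ℝ) (hab : a < b) (f g h : ℝ → ℝ)
    (hpos : ∀ t ∈ Set.Ioo a b, 0 < h t)
    (ha : h a = 0) (hb : h b = 0)
    (hinj : Set.InjOn (fun t => (f t, g t, h t)) (Set.Icc a b)) :
    ∀ t₁ ∈ Set.Icc a b, ∀ t₂ ∈ Set.Icc a b,
      ∀ s₁ ∈ Set.Ico (0 : ℝ) (2 * Real.pi), ∀ s₂ ∈ Set.Ico (0 : ℝ) (2 * Real.pi),
        (f t₁, g t₁, h t₁ * Real.cos s₁, h t₁ * Real.sin s₁) =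
          (f t₂, g t₂, h t₂ * Real.cos s₂, h t₂ * Real.sin s₂) →
        t₁ = t₂ ∧ (s₁ = s₂ ∨ h t₁ = 0) := by
  have hnn : ∀ t ∈ Set.Icc a b, 0 ≤ h t := by
    rintro t ⟨h1, h2⟩
    rcases eq_or_lt_of_le h1 with rfl | h1
    · exact le_of_eq ha.symm
    rcases eq_or_lt_of_le h2 with rfl | h2
    · exact le_of_eq hb.symm
    exact (hpos t ⟨h1, h2⟩).le
  intro t₁ ht₁ t₂ ht₂ s₁ hs₁ s₂ hs₂ heq
  obtain ⟨hf, hg, hc, hs⟩ : f t₁ = f t₂ ∧ g t₁ = g t₂ ∧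
      h t₁ * Real.cos s₁ = h t₂ * Real.cos s₂ ∧ h t₁ * Real.sin s₁ = h t₂ * Real.sin s₂ := by
    simpa [Prod.ext_iff] using heq
  have hsq : (h t₁) ^ 2 = (h t₂) ^ 2 := by
    have e1 : (h t₁) ^ 2 = (h t₁ * Real.cos s₁) ^ 2 + (h t₁ * Real.sin s₁) ^ 2 := by
      have := Real.sin_sq_add_cos_sq s₁; nlinarith
    have e2 : (h t₂) ^ 2 = (h t₂ * Real.cos s₂) ^ 2 + (h t₂ * Real.sin s₂) ^ 2 := by
      have := Real.sin_sq_add_cos_sq s₂; nlinarith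
    rw [e1, hc, hs, ← e2]
  have hh : h t₁ = h t₂ := by
    have := hnn t₁ ht₁; have := hnn t₂ ht₂
    nlinarith
  have ht : t₁ = t₂ := hinj ht₁ ht₂ (by simp [hf, hg, hh])
  refine ⟨ht, ?_⟩
  rcases eq_or_ne (h t₁) 0 with h0 | h0
  · exact Or.inr h0
  left
  rw [← hh] at hc hs
  have hcos : Real.cos s₁ = Real.cos s₂ := mul_left_cancel₀ h0 hc
  have hsin : Real.sin s₁ = Real.sin s₂ := mul_left_cancel₀ h0 hs
  have hang : (s₁ : Real.Angle) = s₂ := Real.Angle.cos_sin_inj hcos hsin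
  obtain ⟨k, hk⟩ := Real.Angle.angle_eq_iff_two_pi_dvd_sub.mp hang
  have hpi := Real.pi_pos
  have hk0 : (k : ℝ) = 0 := by
    rcases hs₁ with ⟨h1a, h1b⟩; rcases hs₂ with ⟨h2a, h2b⟩
    by_contra hne
    rcases lt_or_gt_of_ne hne with hlt | hgt
    · have hk1 : (k : ℝ) ≤ -1 := by
        have hk' : k < 0 := by exact_mod_cast hlt
        have : k ≤ -1 := by omega
        exact_mod_cast this
      nlinarith
    · have : (1 : ℝ) ≤ k := by exact_mod_cast hgt
      nlinarith
  linarith [hk, hk0, mul_eq_zero_of_right (2 * Real.pi) hk0]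
end

section
/- Let a < b be real numbers and let f, g, h : ℝ → ℝ be continuous functions with h(a) = 0 = h(b), h(t) > 0 for all t ∈ (a,b), and such that the curve t ↦ (f(t), g(t), h(t)) is injective on [a,b]. Then the subset {(f(t), g(t), h(t)·sin s, h(t)·cos s) : t ∈ [a,b], s ∈ [0, π]} of ℝ⁴, equipped with the subspace topology, is homeomorphic to the closed unit disc {x ∈ ℝ² : ‖x‖ ≤ 1}. -/
/-- Two Hausdorff quotients of a compact space with the same fibers are homeomorphic. -/
lemma same_fiber_homeo {X Y Z : Type*} [TopologicalSpace X] [TopologicalSpace Y]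
    [TopologicalSpace Z] [CompactSpace X] [T2Space Y] [T2Space Z] {f : X → Y} {g : X → Z}
    (hf : Continuous f) (hg : Continuous g) (hfs : Function.Surjective f)
    (hgs : Function.Surjective g)
    (hfib : ∀ x x', f x = f x' ↔ g x = g x') : Nonempty (Y ≃ₜ Z) := by
  haveI hY : CompactSpace Y := by
    constructor
    rw [← Set.range_eq_univ.mpr hfs]
    exact isCompact_range hf
  have hqm : Topology.IsQuotientMap f := hf.isClosedMap.isQuotientMap hf hfs
  choose σ hσ using hfs
  have hcomp : ∀ x, g (σ (f x)) = g x := fun x => (hfib _ _).1 (hσ (f x))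
  have hFcont : Continuous (g ∘ σ) := by
    rw [hqm.continuous_iff]
    have : ((g ∘ σ) ∘ f) = g := funext hcomp
    rw [this]; exact hg
  have hinj : Function.Injective (g ∘ σ) := by
    intro y y' hy
    have := (hfib (σ y) (σ y')).2 hy
    rwa [hσ y, hσ y'] at this
  have hsurj : Function.Surjective (g ∘ σ) := by
    intro z
    obtain ⟨x, rfl⟩ := hgs z
    exact ⟨f x, hcomp x⟩
  exact ⟨@Continuous.homeoOfEquivCompactToT2 _ _ _ _ _ _
    (Equiv.ofBijective _ ⟨hinj, hsurj⟩) hFcont⟩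

set_option maxHeartbeats 1000000 in
/-- The half-spin of an injective arc in the upper half space with endpoints on
the boundary plane is homeomorphic to the closed unit 2-disc. -/
theorem stmt_12 (a b : ℝ) (hab : a < b) (f g h : ℝ → ℝ)
    (hf : Continuous f) (hg : Continuous g) (hh : Continuous h)
    (ha : h a = 0) (hb : h b = 0)
    (hpos : ∀ t ∈ Set.Ioo a b, 0 < h t)
    (hinj : Set.InjOn (fun t => (f t, g t, h t)) (Set.Icc a b)) :
    Nonempty
      (({v : ℝ × ℝ × ℝ × ℝ | ∃ t ∈ Set.Icc a b, ∃ s ∈ Set.Icc (0 : ℝ) Real.pi,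
          v = (f t, g t, h t * Real.sin s, h t * Real.cos s)}) ≃ₜ
        ({x : EuclideanSpace ℝ (Fin 2) | ‖x‖ ≤ 1})) := by
  have hba : (0 : ℝ) < b - a := sub_pos.mpr hab
  have hπ : (0 : ℝ) < Real.pi := Real.pi_pos
  set K : Set (ℝ × ℝ) := Set.Icc a b ×ˢ Set.Icc 0 Real.pi with hKdef
  haveI : CompactSpace K := isCompact_iff_compactSpace.mp (isCompact_Icc.prod isCompact_Icc)
  set Φ : ℝ × ℝ → ℝ × ℝ × ℝ × ℝ :=
    fun p => (f p.1, g p.1, h p.1 * Real.sin p.2, h p.1 * Real.cos p.2) with hΦdef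
  set α : ℝ → ℝ := fun t => Real.pi * (t - a) / (b - a) with hαdef
  set Ψ : ℝ × ℝ → EuclideanSpace ℝ (Fin 2) :=
    fun p => (WithLp.equiv 2 (Fin 2 → ℝ)).symm
      ![-Real.cos (α p.1), Real.sin (α p.1) * Real.cos p.2] with hΨdef
  -- basic facts about α
  have hα_mem : ∀ t ∈ Set.Icc a b, α t ∈ Set.Icc 0 Real.pi := by
    intro t ht
    have h1 : 0 ≤ (t - a) / (b - a) := div_nonneg (by linarith [ht.1]) hba.le
    have h2 : (t - a) / (b - a) ≤ 1 := (div_le_one hba).mpr (by linarith [ht.2])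
    constructor
    · have : α t = Real.pi * ((t - a) / (b - a)) := by rw [hαdef]; ring
      rw [this]; positivity
    · have : α t = Real.pi * ((t - a) / (b - a)) := by rw [hαdef]; ring
      rw [this]
      calc Real.pi * ((t - a) / (b - a)) ≤ Real.pi * 1 := by
            exact mul_le_mul_of_nonneg_left h2 hπ.le
        _ = Real.pi := mul_one _
  have hα_inj : ∀ t t', α t = α t' → t = t' := by
    intro t t' htt
    rw [hαdef] at htt
    field_simp at htt
    linarith
  have hα_a : α a = 0 := by rw [hαdef]; simp
  have hα_b : α b = Real.pi := by rw [hαdef]; field_simp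
  -- basic facts about h
  have hnn : ∀ t ∈ Set.Icc a b, 0 ≤ h t := by
    intro t ht
    rcases eq_or_ne t a with rfl | hta
    · rw [ha]
    rcases eq_or_ne t b with rfl | htb
    · rw [hb]
    exact (hpos t ⟨lt_of_le_of_ne ht.1 (Ne.symm hta), lt_of_le_of_ne ht.2 htb⟩).le
  have hzero : ∀ t ∈ Set.Icc a b, h t = 0 → t = a ∨ t = b := by
    intro t ht h0
    by_contra hc
    push_neg at hc
    exact absurd h0 (ne_of_gt (hpos t ⟨lt_of_le_of_ne ht.1 (Ne.symm hc.1),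
      lt_of_le_of_ne ht.2 hc.2⟩))
  have hsinpos : ∀ t ∈ Set.Icc a b, t ≠ a → t ≠ b → 0 < Real.sin (α t) := by
    intro t ht hta htb
    have hm := hα_mem t ht
    apply Real.sin_pos_of_pos_of_lt_pi
    · rcases lt_or_eq_of_le hm.1 with h' | h'
      · exact h'
      · exact absurd (hα_inj t a (by rw [hα_a, ← h'])) hta
    · rcases lt_or_eq_of_le hm.2 with h' | h'
      · exact h'
      · exact absurd (hα_inj t b (by rw [hα_b, h'])) htb
  -- characterization of fibers of Φ
  have hPhi : ∀ p ∈ K, ∀ q ∈ K, Φ p = Φ q ↔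
      (p.1 = q.1 ∧ (p.2 = q.2 ∨ p.1 = a ∨ p.1 = b)) := by
    intro p hp q hq
    simp only [hKdef, Set.mem_prod] at hp hq
    constructor
    · intro hpq
      have e1 : f p.1 = f q.1 := congrArg (fun v => v.1) hpq
      have e2 : g p.1 = g q.1 := congrArg (fun v => v.2.1) hpq
      have e3 : h p.1 * Real.sin p.2 = h q.1 * Real.sin q.2 := congrArg (fun v => v.2.2.1) hpq
      have e4 : h p.1 * Real.cos p.2 = h q.1 * Real.cos q.2 := congrArg (fun v => v.2.2.2) hpq
      have hsq : (h p.1) ^ 2 = (h q.1) ^ 2 := by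
        have l1 : (h p.1) ^ 2 = (h p.1 * Real.sin p.2) ^ 2 + (h p.1 * Real.cos p.2) ^ 2 := by
          rw [mul_pow, mul_pow, ← mul_add, Real.sin_sq_add_cos_sq, mul_one]
        have l2 : (h q.1) ^ 2 = (h q.1 * Real.sin q.2) ^ 2 + (h q.1 * Real.cos q.2) ^ 2 := by
          rw [mul_pow, mul_pow, ← mul_add, Real.sin_sq_add_cos_sq, mul_one]
        rw [l1, l2, e3, e4]
      have hheq : h p.1 = h q.1 := by
        rw [← Real.sqrt_sq (hnn _ hp.1), ← Real.sqrt_sq (hnn _ hq.1), hsq]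
      have ht : p.1 = q.1 := hinj hp.1 hq.1 (by
        show (f p.1, g p.1, h p.1) = (f q.1, g q.1, h q.1)
        rw [e1, e2, hheq])
      refine ⟨ht, ?_⟩
      by_cases hta : p.1 = a
      · exact Or.inr (Or.inl hta)
      by_cases htb : p.1 = b
      · exact Or.inr (Or.inr htb)
      left
      have hp0 : 0 < h p.1 := hpos _ ⟨lt_of_le_of_ne hp.1.1 (Ne.symm hta),
        lt_of_le_of_ne hp.1.2 htb⟩
      have hcos : Real.cos p.2 = Real.cos q.2 := by
        apply mul_left_cancel₀ (ne_of_gt hp0)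
        rw [e4, ht]
      exact Real.injOn_cos hp.2 hq.2 hcos
    · rintro ⟨ht, hrest⟩
      have hcases : p.2 = q.2 ∨ h p.1 = 0 := by
        rcases hrest with hs | hta | htb
        · exact Or.inl hs
        · exact Or.inr (hta ▸ ha)
        · exact Or.inr (htb ▸ hb)
      rcases hcases with hs | h0
      · show (f p.1, g p.1, h p.1 * Real.sin p.2, h p.1 * Real.cos p.2)
          = (f q.1, g q.1, h q.1 * Real.sin q.2, h q.1 * Real.cos q.2)
        rw [ht, hs]
      · show (f p.1, g p.1, h p.1 * Real.sin p.2, h p.1 * Real.cos p.2)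
          = (f q.1, g q.1, h q.1 * Real.sin q.2, h q.1 * Real.cos q.2)
        rw [ht] at h0 ⊢
        rw [h0]
        simp
  -- characterization of fibers of Ψ
  have hPsi : ∀ p ∈ K, ∀ q ∈ K, Ψ p = Ψ q ↔
      (p.1 = q.1 ∧ (p.2 = q.2 ∨ p.1 = a ∨ p.1 = b)) := by
    intro p hp q hq
    simp only [hKdef, Set.mem_prod] at hp hq
    constructor
    · intro hpq
      have e0 : -Real.cos (α p.1) = -Real.cos (α q.1) := by
        have := congrArg (fun v => (WithLp.equiv 2 (Fin 2 → ℝ)) v 0) hpq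
        simpa [hΨdef] using this
      have e1 : Real.sin (α p.1) * Real.cos p.2 = Real.sin (α q.1) * Real.cos q.2 := by
        have := congrArg (fun v => (WithLp.equiv 2 (Fin 2 → ℝ)) v 1) hpq
        simpa [hΨdef] using this
      have hceq : Real.cos (α p.1) = Real.cos (α q.1) := by linarith
      have ht : p.1 = q.1 :=
        hα_inj _ _ (Real.injOn_cos (hα_mem _ hp.1) (hα_mem _ hq.1) hceq)
      refine ⟨ht, ?_⟩
      by_cases hta : p.1 = a
      · exact Or.inr (Or.inl hta)
      by_cases htb : p.1 = b
      · exact Or.inr (Or.inr htb)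
      left
      have hsp : 0 < Real.sin (α p.1) := hsinpos _ hp.1 hta htb
      have hcos : Real.cos p.2 = Real.cos q.2 := by
        apply mul_left_cancel₀ (ne_of_gt hsp)
        rw [e1, ht]
      exact Real.injOn_cos hp.2 hq.2 hcos
    · rintro ⟨ht, hrest⟩
      have hvec : (![-Real.cos (α p.1), Real.sin (α p.1) * Real.cos p.2] : Fin 2 → ℝ)
          = ![-Real.cos (α q.1), Real.sin (α q.1) * Real.cos q.2] := by
        rcases hrest with hs | hta | htb
        · rw [ht, hs]
        · funext i
          fin_cases i
          · simp [ht]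
          · have h0 : Real.sin (α p.1) = 0 := by rw [hta, hα_a, Real.sin_zero]
            simp [ht ▸ h0, h0]
        · funext i
          fin_cases i
          · simp [ht]
          · have h0 : Real.sin (α p.1) = 0 := by rw [htb, hα_b, Real.sin_pi]
            simp [ht ▸ h0, h0]
      show (WithLp.equiv 2 (Fin 2 → ℝ)).symm ![-Real.cos (α p.1), Real.sin (α p.1) * Real.cos p.2]
        = (WithLp.equiv 2 (Fin 2 → ℝ)).symm ![-Real.cos (α q.1), Real.sin (α q.1) * Real.cos q.2]
      exact congrArg _ hvec
  -- Ψ lands in the disc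
  have hΨmem : ∀ p ∈ K, ‖Ψ p‖ ≤ 1 := by
    intro p _
    show ‖(WithLp.equiv 2 (Fin 2 → ℝ)).symm
      ![-Real.cos (α p.1), Real.sin (α p.1) * Real.cos p.2]‖ ≤ 1
    rw [EuclideanSpace.norm_eq]
    rw [Real.sqrt_le_one]
    simp only [Fin.sum_univ_two, WithLp.equiv_symm_apply, PiLp.toLp_apply, Matrix.cons_val_zero,
      Matrix.cons_val_one, Matrix.head_cons, Real.norm_eq_abs, sq_abs]
    nlinarith [Real.sin_sq_add_cos_sq (α p.1), Real.sin_sq_add_cos_sq p.2,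
      sq_nonneg (Real.sin (α p.1)), sq_nonneg (Real.cos p.2),
      sq_nonneg (Real.sin (α p.1) * Real.sin p.2)]
  -- the two maps from K
  set S : Set (ℝ × ℝ × ℝ × ℝ) :=
    {v : ℝ × ℝ × ℝ × ℝ | ∃ t ∈ Set.Icc a b, ∃ s ∈ Set.Icc (0 : ℝ) Real.pi,
      v = (f t, g t, h t * Real.sin s, h t * Real.cos s)} with hSdef
  set D : Set (EuclideanSpace ℝ (Fin 2)) := {x : EuclideanSpace ℝ (Fin 2) | ‖x‖ ≤ 1} with hDdef
  have hPhimemS : ∀ p ∈ K, Φ p ∈ S := by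
    intro p hp
    simp only [hKdef, Set.mem_prod] at hp
    exact ⟨p.1, hp.1, p.2, hp.2, rfl⟩
  set F : K → S := fun x => ⟨Φ x.1, hPhimemS x.1 x.2⟩ with hFdef
  set G : K → D := fun x => ⟨Ψ x.1, hΨmem x.1 x.2⟩ with hGdef
  have hΦc : Continuous Φ := by
    rw [hΦdef]; fun_prop
  have hΨc : Continuous Ψ := by
    rw [hΨdef]
    apply (PiLp.continuous_toLp 2 (fun _ : Fin 2 => ℝ)).comp
    apply continuous_pi
    have hc0 : Continuous fun p : ℝ × ℝ => -Real.cos (α p.1) := by rw [hαdef]; fun_prop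
    have hc1 : Continuous fun p : ℝ × ℝ => Real.sin (α p.1) * Real.cos p.2 := by
      rw [hαdef]; fun_prop
    intro i
    fin_cases i
    · simpa using hc0
    · simpa using hc1
  have hFc : Continuous F := by
    rw [hFdef]
    exact (hΦc.comp continuous_subtype_val).subtype_mk _
  have hGc : Continuous G := by
    rw [hGdef]
    exact (hΨc.comp continuous_subtype_val).subtype_mk _
  have hFs : Function.Surjective F := by
    rintro ⟨v, hv⟩
    obtain ⟨t, ht, s, hs, rfl⟩ := hv
    exact ⟨⟨(t, s), ⟨ht, hs⟩⟩, rfl⟩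
  have hGs : Function.Surjective G := by
    rintro ⟨x, hx⟩
    have hsum : (x 0) ^ 2 + (x 1) ^ 2 ≤ 1 := by
      rw [hDdef, Set.mem_setOf_eq, EuclideanSpace.norm_eq, Real.sqrt_le_one] at hx
      simpa [Fin.sum_univ_two, Real.norm_eq_abs, sq_abs] using hx
    have hp0l : -1 ≤ -(x 0) := by nlinarith [sq_nonneg (x 1), sq_nonneg (x 0 - 1)]
    have hp0r : -(x 0) ≤ 1 := by nlinarith [sq_nonneg (x 1), sq_nonneg (x 0 + 1)]
    set θ := Real.arccos (-(x 0)) with hθdef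
    have hθmem : θ ∈ Set.Icc 0 Real.pi := ⟨Real.arccos_nonneg _, Real.arccos_le_pi _⟩
    set t := a + θ / Real.pi * (b - a) with htdef
    have hαt : α t = θ := by
      rw [hαdef, htdef]
      field_simp
      ring
    have htmem : t ∈ Set.Icc a b := by
      have h1 : 0 ≤ θ / Real.pi := div_nonneg hθmem.1 hπ.le
      have h2 : θ / Real.pi ≤ 1 := (div_le_one hπ).mpr hθmem.2
      constructor
      · rw [htdef]; nlinarith
      · rw [htdef]; nlinarith
    set s := Real.arccos (x 1 / Real.sqrt (1 - (x 0) ^ 2)) with hsdef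
    have hsmem : s ∈ Set.Icc 0 Real.pi := ⟨Real.arccos_nonneg _, Real.arccos_le_pi _⟩
    refine ⟨⟨(t, s), ⟨htmem, hsmem⟩⟩, ?_⟩
    apply Subtype.ext
    show Ψ (t, s) = x
    have e0 : -Real.cos (α (t, s).1) = x 0 := by
      show -Real.cos (α t) = x 0
      rw [hαt, hθdef, Real.cos_arccos hp0l hp0r, neg_neg]
    have hsinθ : Real.sin θ = Real.sqrt (1 - (x 0) ^ 2) := by
      rw [hθdef, Real.sin_arccos]
      congr 1
      ring
    have e1 : Real.sin (α t) * Real.cos s = x 1 := by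
      rw [hαt, hsinθ]
      by_cases hz : Real.sqrt (1 - (x 0) ^ 2) = 0
      · rw [hz, zero_mul]
        have h10 : 1 - (x 0) ^ 2 ≤ 0 := Real.sqrt_eq_zero'.mp hz
        have : (x 1) ^ 2 ≤ 0 := by nlinarith
        have : x 1 = 0 := by nlinarith [sq_nonneg (x 1)]
        rw [this]
      · have hzpos : 0 < Real.sqrt (1 - (x 0) ^ 2) :=
          lt_of_le_of_ne (Real.sqrt_nonneg _) (Ne.symm hz)
        have h1p : 0 < 1 - (x 0) ^ 2 := Real.sqrt_pos.mp hzpos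
        have habs : |x 1| ≤ Real.sqrt (1 - (x 0) ^ 2) := by
          rw [← Real.sqrt_sq_eq_abs]
          exact Real.sqrt_le_sqrt (by nlinarith)
        have hr1 : -1 ≤ x 1 / Real.sqrt (1 - (x 0) ^ 2) := by
          rw [neg_le, ← neg_div]
          apply div_le_one_of_le₀ _ hzpos.le
          calc -(x 1) ≤ |x 1| := neg_le_abs _
            _ ≤ _ := habs
        have hr2 : x 1 / Real.sqrt (1 - (x 0) ^ 2) ≤ 1 := by
          apply div_le_one_of_le₀ _ hzpos.le
          calc x 1 ≤ |x 1| := le_abs_self _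
            _ ≤ _ := habs
        rw [hsdef, Real.cos_arccos hr1 hr2]
        field_simp
    ext i
    fin_cases i
    · simpa [hΨdef] using e0
    · simpa [hΨdef] using e1
  have hfib : ∀ x x' : K, F x = F x' ↔ G x = G x' := by
    intro x x'
    rw [hFdef, hGdef]
    simp only [Subtype.mk_eq_mk]
    rw [hPhi x.1 x.2 x'.1 x'.2, hPsi x.1 x.2 x'.1 x'.2]
  exact same_fiber_homeo hFc hGc hFs hGs hfib
end

section
/- Let a ∈ ℝ and let f, g, h : ℝ → ℝ be continuous functions with h(a) = 0 and h(t) > 0 for all t > a, such that the curve γ(t) = (f(t), g(t), h(t)) is injective on [a, ∞) and proper (i.e., ‖γ(t)‖ → ∞ as t → ∞; equivalently, the preimage under γ of every compact set is compact). Then the subset {(f(t), g(t), h(t)·sin s, h(t)·cos s) : t ∈ [a, ∞), s ∈ ℝ} of ℝ⁴, equipped with the subspace topology, is homeomorphic to ℝ². -/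
open Filter Set

noncomputable def spinRho (p : ℝ × ℝ) : ℝ := Real.sqrt (p.1 ^ 2 + p.2 ^ 2)

lemma spinRho_nonneg (p : ℝ × ℝ) : 0 ≤ spinRho p := Real.sqrt_nonneg _

lemma spinRho_cont : Continuous spinRho :=
  Real.continuous_sqrt.comp ((continuous_fst.pow 2).add (continuous_snd.pow 2))

lemma abs_fst_le_spinRho (p : ℝ × ℝ) : |p.1| ≤ spinRho p := by
  rw [← Real.sqrt_sq_eq_abs]
  exact Real.sqrt_le_sqrt (by nlinarith [sq_nonneg p.2])

lemma abs_snd_le_spinRho (p : ℝ × ℝ) : |p.2| ≤ spinRho p := by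
  rw [← Real.sqrt_sq_eq_abs]
  exact Real.sqrt_le_sqrt (by nlinarith [sq_nonneg p.1])

lemma norm_le_spinRho (p : ℝ × ℝ) : ‖p‖ ≤ spinRho p := by
  rw [Prod.norm_def]
  exact max_le (abs_fst_le_spinRho p) (abs_snd_le_spinRho p)

lemma spinRho_eq_zero_iff (p : ℝ × ℝ) : spinRho p = 0 ↔ p = 0 := by
  constructor
  · intro hp
    have h1 : p.1 ^ 2 + p.2 ^ 2 = 0 := by
      have := Real.sqrt_eq_zero (by positivity) |>.mp hp
      linarith [this]
    have : p.1 = 0 ∧ p.2 = 0 := by constructor <;> nlinarith [sq_nonneg p.1, sq_nonneg p.2]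
    exact Prod.ext this.1 this.2
  · rintro rfl; simp [spinRho]

noncomputable def spinMap (a : ℝ) (f g h : ℝ → ℝ) (p : ℝ × ℝ) : ℝ × ℝ × ℝ × ℝ :=
  (f (a + spinRho p), g (a + spinRho p),
   h (a + spinRho p) * (p.1 / spinRho p), h (a + spinRho p) * (p.2 / spinRho p))

/-- auxiliary continuity lemma: H vanishing at 0 times a bounded function
continuous away from 0 -/
lemma spin_aux_cont (H u : ℝ × ℝ → ℝ) (hH : Continuous H) (hH0 : H 0 = 0)
    (hu : ∀ p, |u p| ≤ 1) (huc : ∀ p : ℝ × ℝ, p ≠ 0 → ContinuousAt u p) :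
    Continuous fun p => H p * u p := by
  rw [continuous_iff_continuousAt]
  intro p
  by_cases hp : p = 0
  · subst hp
    have : Tendsto (fun p => H p * u p) (nhds 0) (nhds 0) := by
      apply squeeze_zero_norm (a := fun p => |H p|)
      · intro p
        rw [Real.norm_eq_abs, abs_mul]
        calc |H p| * |u p| ≤ |H p| * 1 := by
              exact mul_le_mul_of_nonneg_left (hu p) (abs_nonneg _)
          _ = |H p| := mul_one _
      · have : Tendsto (fun p => |H p|) (nhds 0) (nhds |H 0|) :=
          (hH.abs.tendsto 0)
        simpa [hH0] using this
    simpa [ContinuousAt, hH0] using this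
  · exact (hH.continuousAt).mul (huc p hp)

lemma spinMap_cont (a : ℝ) (f g h : ℝ → ℝ) (hf : Continuous f) (hg : Continuous g)
    (hh : Continuous h) (ha : h a = 0) : Continuous (spinMap a f g h) := by
  have ht : Continuous fun p : ℝ × ℝ => a + spinRho p :=
    continuous_const.add spinRho_cont
  have hH : Continuous fun p : ℝ × ℝ => h (a + spinRho p) := hh.comp ht
  have hH0 : h (a + spinRho (0 : ℝ × ℝ)) = 0 := by
    simp [spinRho, ha]
  have hdiv1 : ∀ p : ℝ × ℝ, |p.1 / spinRho p| ≤ 1 := by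
    intro p
    rcases eq_or_ne (spinRho p) 0 with hz | hz
    · simp [hz]
    · rw [abs_div, abs_of_nonneg (spinRho_nonneg p), div_le_one
        (lt_of_le_of_ne (spinRho_nonneg p) (Ne.symm hz))]
      exact abs_fst_le_spinRho p
  have hdiv2 : ∀ p : ℝ × ℝ, |p.2 / spinRho p| ≤ 1 := by
    intro p
    rcases eq_or_ne (spinRho p) 0 with hz | hz
    · simp [hz]
    · rw [abs_div, abs_of_nonneg (spinRho_nonneg p), div_le_one
        (lt_of_le_of_ne (spinRho_nonneg p) (Ne.symm hz))]
      exact abs_snd_le_spinRho p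
  have hc1 : ∀ p : ℝ × ℝ, p ≠ 0 → ContinuousAt (fun q : ℝ × ℝ => q.1 / spinRho q) p := by
    intro p hp
    exact continuousAt_fst.div spinRho_cont.continuousAt
      (fun hz => hp ((spinRho_eq_zero_iff p).mp hz))
  have hc2 : ∀ p : ℝ × ℝ, p ≠ 0 → ContinuousAt (fun q : ℝ × ℝ => q.2 / spinRho q) p := by
    intro p hp
    exact continuousAt_snd.div spinRho_cont.continuousAt
      (fun hz => hp ((spinRho_eq_zero_iff p).mp hz))
  refine Continuous.prodMk (hf.comp ht) (Continuous.prodMk (hg.comp ht)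
    (Continuous.prodMk ?_ ?_))
  · exact spin_aux_cont _ _ hH hH0 hdiv1 hc1
  · exact spin_aux_cont _ _ hH hH0 hdiv2 hc2

lemma spin_key (a : ℝ) (h : ℝ → ℝ) (ha : h a = 0) (p : ℝ × ℝ) :
    (h (a + spinRho p) * (p.1 / spinRho p)) ^ 2
      + (h (a + spinRho p) * (p.2 / spinRho p)) ^ 2 = h (a + spinRho p) ^ 2 := by
  rcases eq_or_ne (spinRho p) 0 with hz | hz
  · rw [hz]; simp [ha]
  · have hsq : spinRho p ^ 2 = p.1 ^ 2 + p.2 ^ 2 := by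
      rw [spinRho, Real.sq_sqrt (by positivity)]
    field_simp
    ring_nf
    nlinarith [hsq, sq_nonneg (h (a + spinRho p))]

lemma spin_h_nonneg (a : ℝ) (h : ℝ → ℝ) (ha : h a = 0) (hpos : ∀ t, a < t → 0 < h t)
    {t : ℝ} (ht : a ≤ t) : 0 ≤ h t := by
  rcases eq_or_lt_of_le ht with rfl | hlt
  · exact le_of_eq ha.symm
  · exact (hpos t hlt).le

lemma spinMap_inj (a : ℝ) (f g h : ℝ → ℝ) (ha : h a = 0) (hpos : ∀ t, a < t → 0 < h t)
    (hinj : Set.InjOn (fun t => (f t, g t, h t)) (Set.Ici a)) :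
    Function.Injective (spinMap a f g h) := by
  intro p q hpq
  set tp := a + spinRho p with htp
  set tq := a + spinRho q with htq
  have hmp : tp ∈ Set.Ici a := le_add_of_nonneg_right (spinRho_nonneg p)
  have hmq : tq ∈ Set.Ici a := le_add_of_nonneg_right (spinRho_nonneg q)
  obtain ⟨e1, e2, e3, e4⟩ : f tp = f tq ∧ g tp = g tq ∧
      h tp * (p.1 / spinRho p) = h tq * (q.1 / spinRho q) ∧
      h tp * (p.2 / spinRho p) = h tq * (q.2 / spinRho q) := by
    simpa [spinMap, Prod.ext_iff] using hpq
  have hsq : h tp ^ 2 = h tq ^ 2 := by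
    rw [← spin_key a h ha p, ← spin_key a h ha q, ← htp, ← htq, e3, e4]
  have hheq : h tp = h tq := by
    nlinarith [spin_h_nonneg a h ha hpos hmp, spin_h_nonneg a h ha hpos hmq]
  have hteq : tp = tq := hinj hmp hmq (by simp [e1, e2, hheq])
  have hrho : spinRho p = spinRho q := by
    have := hteq; rw [htp, htq] at this; linarith
  rcases eq_or_ne (spinRho p) 0 with hz | hz
  · have hp0 : p = 0 := (spinRho_eq_zero_iff p).mp hz
    have hq0 : q = 0 := (spinRho_eq_zero_iff q).mp (by rw [← hrho]; exact hz)
    rw [hp0, hq0]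
  · have hrpos : 0 < spinRho p := lt_of_le_of_ne (spinRho_nonneg p) (Ne.symm hz)
    have hhpos : 0 < h tp := hpos tp (by rw [htp]; linarith)
    rw [← hteq, ← hrho] at e3 e4
    have h1 : p.1 = q.1 := by
      have := mul_left_cancel₀ (ne_of_gt hhpos) e3
      field_simp at this; exact this
    have h2 : p.2 = q.2 := by
      have := mul_left_cancel₀ (ne_of_gt hhpos) e4
      field_simp at this; exact this
    exact Prod.ext h1 h2

/-- existence of an angle with given sine and cosine on the unit circle -/
lemma spin_angle (x y : ℝ) (hxy : x ^ 2 + y ^ 2 = 1) :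
    ∃ s : ℝ, Real.sin s = x ∧ Real.cos s = y := by
  have hy1 : -1 ≤ y := by nlinarith [sq_nonneg x]
  have hy2 : y ≤ 1 := by nlinarith [sq_nonneg x]
  have hcos : Real.cos (Real.arccos y) = y := Real.cos_arccos hy1 hy2
  have hsin : Real.sin (Real.arccos y) = Real.sqrt (1 - y ^ 2) :=
    Real.sin_arccos y
  have habs : Real.sqrt (1 - y ^ 2) = |x| := by
    rw [show (1 : ℝ) - y ^ 2 = x ^ 2 by linarith, Real.sqrt_sq_eq_abs]
  rcases le_or_gt 0 x with hx | hx
  · exact ⟨Real.arccos y, by rw [hsin, habs, abs_of_nonneg hx], hcos⟩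
  · refine ⟨-Real.arccos y, ?_, by rw [Real.cos_neg, hcos]⟩
    rw [Real.sin_neg, hsin, habs, abs_of_neg hx, neg_neg]

lemma spinMap_range (a : ℝ) (f g h : ℝ → ℝ) (ha : h a = 0) :
    Set.range (spinMap a f g h)
      = {v : ℝ × ℝ × ℝ × ℝ | ∃ t ∈ Set.Ici a, ∃ s : ℝ,
          v = (f t, g t, h t * Real.sin s, h t * Real.cos s)} := by
  ext v
  constructor
  · rintro ⟨p, rfl⟩
    refine ⟨a + spinRho p, le_add_of_nonneg_right (spinRho_nonneg p), ?_⟩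
    rcases eq_or_ne (spinRho p) 0 with hz | hz
    · refine ⟨0, ?_⟩
      have hp0 : p = 0 := (spinRho_eq_zero_iff p).mp hz
      simp [spinMap, hp0, spinRho, ha]
    · have hrpos : 0 < spinRho p := lt_of_le_of_ne (spinRho_nonneg p) (Ne.symm hz)
      obtain ⟨s, hs, hc⟩ := spin_angle (p.1 / spinRho p) (p.2 / spinRho p) (by
        have hsq : spinRho p ^ 2 = p.1 ^ 2 + p.2 ^ 2 := by
          rw [spinRho, Real.sq_sqrt (by positivity)]
        field_simp
        linarith)
      exact ⟨s, by simp [spinMap, hs, hc]⟩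
  · rintro ⟨t, ht, s, rfl⟩
    refine ⟨((t - a) * Real.sin s, (t - a) * Real.cos s), ?_⟩
    have hta : 0 ≤ t - a := by simpa using ht
    have hrho : spinRho ((t - a) * Real.sin s, (t - a) * Real.cos s) = t - a := by
      rw [spinRho]
      have : ((t - a) * Real.sin s) ^ 2 + ((t - a) * Real.cos s) ^ 2 = (t - a) ^ 2 := by
        have := Real.sin_sq_add_cos_sq s
        nlinarith
      rw [this, Real.sqrt_sq hta]
    rcases eq_or_lt_of_le hta with hz | hz
    · have hteq : t = a := by linarith
      have h0 : spinRho (0 : ℝ × ℝ) = 0 := by simp [spinRho]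
      simp [spinMap, hrho, ← hz, hteq, ha, h0, spinRho]
    · have hne : t - a ≠ 0 := ne_of_gt hz
      simp only [spinMap, hrho]
      rw [show a + (t - a) = t by ring]
      rw [mul_div_cancel_left₀ _ hne, mul_div_cancel_left₀ _ hne]

lemma spinMap_norm_bound (a : ℝ) (f g h : ℝ → ℝ) (ha : h a = 0)
    (hpos : ∀ t, a < t → 0 < h t) (p : ℝ × ℝ) :
    ‖(f (a + spinRho p), g (a + spinRho p), h (a + spinRho p))‖
      ≤ Real.sqrt 2 * ‖spinMap a f g h p‖ := by
  set t := a + spinRho p with htdef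
  set c := h t * (p.1 / spinRho p) with hc
  set d := h t * (p.2 / spinRho p) with hd
  have hsq2 : (Real.sqrt 2) ^ 2 = 2 := Real.sq_sqrt (by norm_num)
  have h12 : (1 : ℝ) ≤ Real.sqrt 2 := by
    nlinarith [Real.sqrt_nonneg 2]
  have hkey : c ^ 2 + d ^ 2 = h t ^ 2 := spin_key a h ha p
  have hhn : 0 ≤ h t := spin_h_nonneg a h ha hpos (le_add_of_nonneg_right (spinRho_nonneg p))
  set M := max |c| |d| with hM
  have hMn : 0 ≤ M := le_trans (abs_nonneg c) (le_max_left _ _)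
  have hhM : h t ≤ Real.sqrt 2 * M := by
    have h1 : c ^ 2 ≤ M ^ 2 := by
      have := le_max_left |c| |d|
      nlinarith [abs_nonneg c, sq_abs c]
    have h2 : d ^ 2 ≤ M ^ 2 := by
      have := le_max_right |c| |d|
      nlinarith [abs_nonneg d, sq_abs d]
    have hle : h t ^ 2 ≤ 2 * M ^ 2 := by nlinarith
    calc h t = Real.sqrt (h t ^ 2) := (Real.sqrt_sq hhn).symm
      _ ≤ Real.sqrt (2 * M ^ 2) := Real.sqrt_le_sqrt hle
      _ = Real.sqrt 2 * M := by
          rw [Real.sqrt_mul (by norm_num : (0:ℝ) ≤ 2), Real.sqrt_sq hMn]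
  have hnorm1 : ‖(f t, g t, h t)‖ = max |f t| (max |g t| |h t|) := by
    simp [Prod.norm_def, Real.norm_eq_abs]
  have hnorm2 : ‖spinMap a f g h p‖ = max |f t| (max |g t| M) := by
    simp [spinMap, Prod.norm_def, Real.norm_eq_abs, ← htdef, ← hc, ← hd, hM]
  rw [hnorm1, hnorm2]
  have hRHS : 0 ≤ max |f t| (max |g t| M) :=
    le_trans (abs_nonneg _) (le_max_left _ _)
  refine max_le ?_ (max_le ?_ ?_)
  · calc |f t| ≤ max |f t| (max |g t| M) := le_max_left _ _
      _ ≤ Real.sqrt 2 * max |f t| (max |g t| M) := le_mul_of_one_le_left hRHS h12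
  · calc |g t| ≤ max |f t| (max |g t| M) :=
        le_trans (le_max_left _ _) (le_max_right _ _)
      _ ≤ Real.sqrt 2 * max |f t| (max |g t| M) := le_mul_of_one_le_left hRHS h12
  · calc |h t| = h t := abs_of_nonneg hhn
      _ ≤ Real.sqrt 2 * M := hhM
      _ ≤ Real.sqrt 2 * max |f t| (max |g t| M) := by
        apply mul_le_mul_of_nonneg_left _ (Real.sqrt_nonneg 2)
        exact le_trans (le_max_right _ _) (le_max_right _ _)

lemma spinMap_proper (a : ℝ) (f g h : ℝ → ℝ) (ha : h a = 0)
    (hpos : ∀ t, a < t → 0 < h t)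
    (hproper : Tendsto (fun t => ‖(f t, g t, h t)‖) atTop atTop) :
    Tendsto (spinMap a f g h) (cocompact (ℝ × ℝ)) (cocompact (ℝ × ℝ × ℝ × ℝ)) := by
  rw [← Metric.cobounded_eq_cocompact (α := ℝ × ℝ × ℝ × ℝ), ← comap_norm_atTop, tendsto_comap_iff]
  have h1 : Tendsto (fun p : ℝ × ℝ => a + spinRho p) (cocompact (ℝ × ℝ)) atTop := by
    refine tendsto_atTop_mono (fun p => add_le_add_right (norm_le_spinRho p) a) ?_
    exact tendsto_atTop_add_const_left _ a tendsto_norm_cocompact_atTop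
  have h2 : Tendsto (fun p : ℝ × ℝ =>
      ‖(f (a + spinRho p), g (a + spinRho p), h (a + spinRho p))‖)
      (cocompact (ℝ × ℝ)) atTop := hproper.comp h1
  have h3 := Tendsto.atTop_div_const (show (0:ℝ) < Real.sqrt 2 by positivity) h2
  refine tendsto_atTop_mono (fun p => ?_) h3
  rw [div_le_iff₀ (by positivity : (0:ℝ) < Real.sqrt 2), mul_comm]
  exact spinMap_norm_bound a f g h ha hpos p

/-- Spinning a proper injective arc with one endpoint on the boundary plane and
the other end going to infinity produces a surface homeomorphic to the
plane ℝ². -/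
theorem stmt_16 (a : ℝ) (f g h : ℝ → ℝ)
    (hf : Continuous f) (hg : Continuous g) (hh : Continuous h)
    (ha : h a = 0) (hpos : ∀ t, a < t → 0 < h t)
    (hinj : Set.InjOn (fun t => (f t, g t, h t)) (Set.Ici a))
    (hproper : Filter.Tendsto (fun t => ‖(f t, g t, h t)‖)
      Filter.atTop Filter.atTop) :
    Nonempty
      (({v : ℝ × ℝ × ℝ × ℝ | ∃ t ∈ Set.Ici a, ∃ s : ℝ,
          v = (f t, g t, h t * Real.sin s, h t * Real.cos s)}) ≃ₜ (ℝ × ℝ)) := by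
  have hcont : Continuous (spinMap a f g h) := spinMap_cont a f g h hf hg hh ha
  have hinj' : Function.Injective (spinMap a f g h) := spinMap_inj a f g h ha hpos hinj
  have hprop : IsProperMap (spinMap a f g h) :=
    isProperMap_iff_tendsto_cocompact.mpr ⟨hcont, spinMap_proper a f g h ha hpos hproper⟩
  have hemb : Topology.IsEmbedding (spinMap a f g h) :=
    (Topology.IsClosedEmbedding.of_continuous_injective_isClosedMap hcont hinj'
      hprop.isClosedMap).toIsEmbedding
  have e : (ℝ × ℝ) ≃ₜ Set.range (spinMap a f g h) :=
    Topology.IsEmbedding.toHomeomorph hemb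
  exact ⟨(Homeomorph.setCongr (spinMap_range a f g h ha).symm).trans e.symm⟩
end
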